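/- Let v = Σ_N c_N φ_N be a nonzero element of H* with only finitely many c_N ≠ 0, and let Z be a rooted forest with c_Z ≠ 0 whose total number of vertices is maximal among all forests N with c_N ≠ 0. Then E^top_Z v = c_Z φ_∅. -/

import Mathlib

open scoped Classical

/-- Concrete (labeled) rooted trees: a root with a list of subtrees. -/
inductive RTree : Type
  | node : List RTree → RTree

/-- Shapes of admissible cuts: at each tree, either the full cut
(everything, including the root, goes to the pruned part `P`), or a choice of
an admissible cut of each child subtree.  A `full` occurring strictly inside
corresponds to cutting the edge above that vertex. -/
inductive CutShape : Type
  | full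
  | branch : List CutShape → CutShape

namespace CK

/-- Number of vertices of a forest. -/
def sizeL : List RTree → ℕ
  | [] => 0
  | .node l :: ts => 1 + sizeL l + sizeL ts

/-- All admissible cuts of a forest (a choice of admissible cut of each tree). -/
def cutsF : List RTree → List (List CutShape)
  | [] => [[]]
  | .node l :: ts =>
      (CutShape.full :: (cutsF l).map CutShape.branch).flatMap
        fun c => (cutsF ts).map (c :: ·)

/-- The root part `R_C(F)` of a cut. -/
def Rcut : List RTree → List CutShape → List RTree
  | [], _ => []
  | _ :: _, [] => []
  | .node _ :: ts, .full :: cs => Rcut ts cs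
  | .node l :: ts, .branch ds :: cs => RTree.node (Rcut l ds) :: Rcut ts cs

/-- The pruned part `P_C(F)` of a cut. -/
def Pcut : List RTree → List CutShape → List RTree
  | [], _ => []
  | _ :: _, [] => []
  | .node l :: ts, .full :: cs => RTree.node l :: Pcut ts cs
  | .node l :: ts, .branch ds :: cs => Pcut l ds ++ Pcut ts cs

/-- Number of `full`s occurring in a cut. -/
def fullsL : List CutShape → ℕ
  | [] => 0
  | .full :: cs => 1 + fullsL cs
  | .branch ds :: cs => fullsL ds + fullsL cs

/-- A list of concrete forests containing (representatives of) every forest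
with at most `n` vertices. -/
def forestsUpTo : ℕ → List (List RTree)
  | 0 => [[]]
  | n+1 => [] :: (forestsUpTo n).flatMap fun l => (forestsUpTo n).map fun F => RTree.node l :: F

/-- Isomorphism of rooted trees (non-planar): a root-preserving bijection, i.e.
the lists of subtrees agree up to permutation and isomorphism. -/
inductive Iso : RTree → RTree → Prop
  | node {l₁ l l₂ : List RTree} : List.Forall₂ Iso l₁ l → l.Perm l₂ → Iso (.node l₁) (.node l₂)

/-- Isomorphism classes of rooted trees. -/
abbrev TreeClass : Type := Quot Iso

/-- Isomorphism classes of rooted forests = multisets of tree classes.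
The empty forest is `0`. -/
abbrev ForestClass : Type := Multiset TreeClass

/-- Isomorphism class of a tree. -/
def clT (t : RTree) : TreeClass := Quot.mk _ t

/-- Isomorphism class of a forest. -/
def clF (F : List RTree) : ForestClass := (F.map clT : List TreeClass)

/-- A concrete representative of a forest class. -/
noncomputable def repF (M : ForestClass) : List RTree := M.toList.map Quot.out

/-- A concrete representative of a tree class. -/
noncomputable def repT (T : TreeClass) : RTree := T.out

/-- Number of vertices of a forest class. -/
noncomputable def sizeC (M : ForestClass) : ℕ := sizeL (repF M)

/-- Number of vertices of a tree class. -/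
noncomputable def sizeT (T : TreeClass) : ℕ := sizeL [repT T]

/-- The Hall algebra `H`: finitely supported ℚ-valued functions on
isomorphism classes of rooted forests, with basis the delta functions. -/
abbrev H : Type := ForestClass →₀ ℚ

/-- The basis element `δ_A` of `H`. -/
noncomputable def delta (A : ForestClass) : H := Finsupp.single A 1

/-- `n(A,B;M)`: the number of admissible cuts `C` of `M` with
`P_C(M) ≅ A` and `R_C(M) ≅ B`. -/
noncomputable def nCuts (A B M : ForestClass) : ℕ :=
  (cutsF (repF M)).countP fun c =>
    decide (clF (Pcut (repF M) c) = A ∧ clF (Rcut (repF M) c) = B)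

/-- A finite set of forest classes containing all classes with at most `n`
vertices. -/
noncomputable def forestCand (n : ℕ) : Finset ForestClass :=
  ((forestsUpTo n).map clF).toFinset

/-- A finite set of tree classes containing all classes with at most `n+1`
vertices. -/
noncomputable def treeCand (n : ℕ) : Finset TreeClass :=
  ((forestsUpTo n).map fun F => clT (RTree.node F)).toFinset

/-- The Hall product on basis elements: `δ_A × δ_B = Σ_M n(A,B;M)·δ_M`
(every `M` with `n(A,B;M) ≠ 0` has exactly `sizeC A + sizeC B` vertices). -/
noncomputable def mulBasis (A B : ForestClass) : H :=
  ∑ M ∈ forestCand (sizeC A + sizeC B), (nCuts A B M : ℚ) • delta M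

/-- The Hall product on `H`, extended bilinearly from basis elements. -/
noncomputable def hmul (f g : H) : H :=
  f.sum fun A a => g.sum fun B b => (a * b) • mulBasis A B

/-- The Connes-Kreimer Lie algebra `n_T` (as a vector space): the span of
isomorphism classes of rooted trees. -/
abbrev nT : Type := TreeClass →₀ ℚ

/-- The basis element of `n_T` corresponding to a rooted tree `T`. -/
noncomputable def tau (T : TreeClass) : nT := Finsupp.single T 1

/-- `a(T₁,T₂;T)`: the number of edges `e` of `T` such that the single-edge cut
at `e` has pruned part `≅ T₁` and root part `≅ T₂`. -/
noncomputable def aCount (T₁ T₂ T : TreeClass) : ℕ :=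
  (cutsF [repT T]).countP fun c =>
    decide (fullsL c = 1 ∧ clF (Pcut [repT T] c) = ({T₁} : Multiset TreeClass)
      ∧ clF (Rcut [repT T] c) = ({T₂} : Multiset TreeClass))

/-- The grafting (pre-Lie) product on basis elements:
`T₁ * T₂ = Σ_T a(T₁,T₂;T)·T`. -/
noncomputable def graftBasis (T₁ T₂ : TreeClass) : nT :=
  ∑ T ∈ treeCand (sizeT T₁ + sizeT T₂), (aCount T₁ T₂ T : ℚ) • tau T

/-- The grafting (pre-Lie) product on `n_T`, extended bilinearly. -/
noncomputable def graft (x y : nT) : nT :=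
  x.sum fun T₁ a => y.sum fun T₂ b => (a * b) • graftBasis T₁ T₂

/-- The Connes-Kreimer bracket `[x,y] = x*y - y*x` on `n_T`. -/
noncomputable def ckBracket (x y : nT) : nT := graft x y - graft y x

/-- `Ẽ_A δ_B = Σ_C δ_{R_C(B)}`, the sum over admissible cuts `C` of `B` with
`P_C(B) ≅ A`. -/
noncomputable def elimBasis (A B : ForestClass) : H :=
  (((cutsF (repF B)).filter fun c => decide (clF (Pcut (repF B) c) = A)).map
    fun c => delta (clF (Rcut (repF B) c))).sum

/-- The elimination operator `E_A` (here on `H ≅ H*`, identifying `φ_B` with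
`δ_B`). -/
noncomputable def elim (A : ForestClass) : H →ₗ[ℚ] H :=
  Finsupp.lsum ℚ fun B => LinearMap.toSpanSingleton ℚ H (elimBasis A B)

/-- `Ẽ^top_A δ_B = Σ_C δ_{P_C(B)}`, the sum over admissible cuts `C` of `B`
with `R_C(B) ≅ A`. -/
noncomputable def topElimBasis (A B : ForestClass) : H :=
  (((cutsF (repF B)).filter fun c => decide (clF (Rcut (repF B) c) = A)).map
    fun c => delta (clF (Pcut (repF B) c))).sum

/-- The top-elimination operator `E^top_A`. -/
noncomputable def topElim (A : ForestClass) : H →ₗ[ℚ] H :=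
  Finsupp.lsum ℚ fun B => LinearMap.toSpanSingleton ℚ H (topElimBasis A B)

/-- `H ⊗ H`, realized as finitely supported functions on pairs of classes. -/
abbrev H2 : Type := (ForestClass × ForestClass) →₀ ℚ

/-- `Δ(δ_M) = Σ δ_A ⊗ δ_B`, the sum over ordered pairs `(A,B)` of classes with
`A ⊔ B ≅ M`. -/
noncomputable def deltaBasis (M : ForestClass) : H2 :=
  ∑ A ∈ M.powerset.toFinset, Finsupp.single (A, M - A) 1

/-- The coproduct `Δ : H → H ⊗ H`. -/
noncomputable def coprod : H →ₗ[ℚ] H2 :=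
  Finsupp.lsum ℚ fun M => LinearMap.toSpanSingleton ℚ H2 (deltaBasis M)

/-!
If a cut `C` of `B` has `R_C(B) ≅ Z`, then `P_C(B)` has `|B| - |Z|` vertices, so when `|B| ≤ |Z|`
it is empty: `C` is the empty cut and `R_C(B) = B`. Hence `E^top_Z φ_B = 0` for every `B ≠ Z`
with `|B| ≤ |Z|`, while `E^top_Z φ_Z = φ_∅`, the empty cut being the only cut of `Z` with empty
pruned part.
-/

theorem sizeL_cons (t : RTree) (ts : List RTree) : sizeL (t :: ts) = sizeL [t] + sizeL ts := by
  obtain ⟨l⟩ := t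
  simp only [sizeL]; omega

theorem sizeL_append (F G : List RTree) : sizeL (F ++ G) = sizeL F + sizeL G := by
  induction F with
  | nil => simp [sizeL]
  | cons t ts ih =>
    rw [List.cons_append, sizeL_cons t (ts ++ G), sizeL_cons t ts, ih, Nat.add_assoc]

theorem eq_nil_of_sizeL_eq_zero {F : List RTree} (h : sizeL F = 0) : F = [] := by
  obtain _ | ⟨⟨l⟩, ts⟩ := F
  · rfl
  · simp [sizeL] at h

theorem sizeL_eq_sum (F : List RTree) : sizeL F = (F.map fun t => sizeL [t]).sum := by
  induction F with
  | nil => simp [sizeL]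
  | cons t ts ih => rw [sizeL_cons, List.map_cons, List.sum_cons, ih]

theorem sizeL_perm {F G : List RTree} (h : F.Perm G) : sizeL F = sizeL G := by
  rw [sizeL_eq_sum, sizeL_eq_sum, (h.map _).sum_eq]

theorem sizeL_eq_of_forall₂ {R : RTree → RTree → Prop} {F G : List RTree}
    (h : List.Forall₂ R F G) (hR : ∀ a ∈ F, ∀ b, R a b → sizeL [a] = sizeL [b]) :
    sizeL F = sizeL G := by
  induction h with
  | nil => rfl
  | @cons t₁ t₂ F G h _ ih =>
    rw [sizeL_cons t₁ F, sizeL_cons t₂ G, hR t₁ (by simp) t₂ h,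
      ih fun a ha => hR a (List.mem_cons_of_mem _ ha)]

theorem Iso.sizeL_eq : ∀ {t₁ t₂ : RTree}, Iso t₁ t₂ → sizeL [t₁] = sizeL [t₂]
  | .node l₁, .node _, .node hf hp => by
    have hl := sizeL_eq_of_forall₂ hf fun _ _ _ hab => Iso.sizeL_eq hab
    simp only [sizeL, hl, sizeL_perm hp]
termination_by t₁ => t₁

def TreeClass.size : TreeClass → ℕ :=
  Quot.lift (fun t => sizeL [t]) fun _ _ h => h.sizeL_eq

theorem sizeL_eq_sum_size (F : List RTree) : sizeL F = ((clF F).map TreeClass.size).sum := by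
  rw [sizeL_eq_sum, clF, Multiset.map_coe, Multiset.sum_coe, List.map_map]
  rfl

theorem sizeL_congr {F G : List RTree} (h : clF F = clF G) : sizeL F = sizeL G := by
  rw [sizeL_eq_sum_size, h, ← sizeL_eq_sum_size]

theorem clF_repF (M : ForestClass) : clF (repF M) = M := by
  rw [clF, repF, List.map_map]
  have : clT ∘ (Quot.out : TreeClass → RTree) = id := funext Quot.out_eq
  rw [this, List.map_id, Multiset.coe_toList]

theorem mem_cutsF_cons {l ts : List RTree} {c : List CutShape} :
    c ∈ cutsF (.node l :: ts) ↔
      ∃ cs ∈ cutsF ts, c = .full :: cs ∨ ∃ ds ∈ cutsF l, c = .branch ds :: cs := by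
  simp only [cutsF, List.mem_flatMap, List.mem_cons, List.mem_map]
  constructor
  · rintro ⟨c₀, rfl | ⟨ds, hds, rfl⟩, cs, hcs, rfl⟩
    exacts [⟨cs, hcs, .inl rfl⟩, ⟨cs, hcs, .inr ⟨ds, hds, rfl⟩⟩]
  · rintro ⟨cs, hcs, rfl | ⟨ds, hds, rfl⟩⟩
    exacts [⟨_, .inl rfl, cs, hcs, rfl⟩, ⟨_, .inr ⟨ds, hds, rfl⟩, cs, hcs, rfl⟩]

theorem sizeL_Pcut_add_sizeL_Rcut : ∀ {F : List RTree} {c : List CutShape}, c ∈ cutsF F →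
    sizeL (Pcut F c) + sizeL (Rcut F c) = sizeL F
  | [], c, h => by
    obtain rfl : c = [] := by simpa [cutsF] using h
    simp [Pcut, Rcut, sizeL]
  | .node l :: ts, c, h => by
    obtain ⟨cs, hcs, rfl | ⟨ds, hds, rfl⟩⟩ := mem_cutsF_cons.1 h
    · have := sizeL_Pcut_add_sizeL_Rcut hcs
      simp only [Pcut, Rcut, sizeL]
      omega
    · have := sizeL_Pcut_add_sizeL_Rcut hds
      have := sizeL_Pcut_add_sizeL_Rcut hcs
      simp only [Pcut, Rcut, sizeL, sizeL_append]
      omega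

theorem Rcut_eq_self_of_Pcut_eq_nil : ∀ {F : List RTree} {c : List CutShape}, c ∈ cutsF F →
    Pcut F c = [] → Rcut F c = F
  | [], _, _, _ => by simp [Rcut]
  | .node l :: ts, c, h, hP => by
    obtain ⟨cs, hcs, rfl | ⟨ds, hds, rfl⟩⟩ := mem_cutsF_cons.1 h
    · simp [Pcut] at hP
    · rw [Pcut, List.append_eq_nil_iff] at hP
      rw [Rcut, Rcut_eq_self_of_Pcut_eq_nil hds hP.1, Rcut_eq_self_of_Pcut_eq_nil hcs hP.2]

theorem _root_.List.countP_flatMap_map {α β γ : Type*} (L : List α) (M : List β) (f : α → β → γ)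
    {p : γ → Bool} {q : α → Bool} {r : β → Bool} (h : ∀ a b, p (f a b) = (q a && r b)) :
    (L.flatMap fun a => M.map (f a)).countP p = L.countP q * M.countP r := by
  induction L with
  | nil => simp
  | cons a L ih =>
    rw [List.flatMap_cons, List.countP_append, ih, List.countP_map, List.countP_cons]
    cases hq : q a <;> simp [Function.comp_def, h, hq, Nat.add_mul, Nat.add_comm]

theorem countP_Pcut_eq_nil : ∀ F : List RTree,
    (cutsF F).countP (fun c => decide (Pcut F c = [])) = 1
  | [] => by simp [cutsF, Pcut]
  | .node l :: ts => by
    -- The unique such cut cuts nothing: it is `branch` at every root.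
    rw [cutsF]
    refine (List.countP_flatMap_map _ _ _ (q := fun | .full => false | .branch ds => Pcut l ds = [])
      (r := fun cs => Pcut ts cs = []) (by rintro (_ | ds) cs <;> simp [Pcut])).trans ?_
    simp [List.countP_map, Function.comp_def, countP_Pcut_eq_nil l, countP_Pcut_eq_nil ts]

theorem clF_Rcut_eq_iff {B Z : ForestClass} {c : List CutShape} (hle : sizeC B ≤ sizeC Z)
    (hc : c ∈ cutsF (repF B)) : clF (Rcut (repF B) c) = Z ↔ Pcut (repF B) c = [] ∧ B = Z := by
  constructor
  · intro h
    have hsize : sizeL (Rcut (repF B) c) = sizeC Z := sizeL_congr (h.trans (clF_repF Z).symm)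
    have hP : Pcut (repF B) c = [] := by
      have := sizeL_Pcut_add_sizeL_Rcut hc
      exact eq_nil_of_sizeL_eq_zero (by unfold sizeC at hle hsize; omega)
    refine ⟨hP, ?_⟩
    rwa [Rcut_eq_self_of_Pcut_eq_nil hc hP, clF_repF] at h
  · rintro ⟨hP, rfl⟩
    rw [Rcut_eq_self_of_Pcut_eq_nil hc hP, clF_repF]

theorem topElimBasis_of_sizeC_le {B Z : ForestClass} (hle : sizeC B ≤ sizeC Z) :
    topElimBasis Z B = if B = Z then delta 0 else 0 := by
  have hcuts : (cutsF (repF B)).filter (fun c => clF (Rcut (repF B) c) = Z) =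
      (cutsF (repF B)).filter (fun c => Pcut (repF B) c = [] ∧ B = Z) :=
    List.filter_congr fun c hc => by simp only [clF_Rcut_eq_iff hle hc]
  rw [topElimBasis, hcuts]
  split_ifs with hBZ
  · subst hBZ
    simp only [and_true]
    rw [List.map_congr_left fun c hc => by rw [of_decide_eq_true (List.mem_filter.1 hc).2],
      List.map_const', List.sum_replicate, ← List.countP_eq_length_filter, countP_Pcut_eq_nil,
      one_smul]
    rfl
  · simp [hBZ]

theorem topElim_apply (A : ForestClass) (v : H) :
    topElim A v = v.sum fun B b => b • topElimBasis A B :=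
  rfl

theorem topElim_maximal_term_general (v : H) (Z : ForestClass)
    (hmax : ∀ N ∈ v.support, sizeC N ≤ sizeC Z) :
    topElim Z v = v Z • delta 0 := by
  rw [topElim_apply, Finsupp.sum_eq_single Z ?_ fun _ => zero_smul ℚ _,
    topElimBasis_of_sizeC_le le_rfl, if_pos rfl]
  intro B hB hBZ
  rw [topElimBasis_of_sizeC_le (hmax B (Finsupp.mem_support_iff.2 hB)), if_neg hBZ, smul_zero]

/-- STATEMENT 17: if `v = Σ_N c_N φ_N` is a nonzero finitely supported element
of `H*` and `Z` is a forest with `c_Z ≠ 0` whose number of vertices is maximal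
among the forests in the support of `v`, then `E^top_Z v = c_Z·φ_∅`. -/
theorem topElim_maximal_term (v : H) (hv : v ≠ 0) (Z : ForestClass)
    (hZ : Z ∈ v.support)
    (hmax : ∀ N ∈ v.support, sizeC N ≤ sizeC Z) :
    topElim Z v = v Z • delta 0 :=
  topElim_maximal_term_general v Z hmax

end CK
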